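/- arXiv:2009.09033 — 2 statements merged into one kernel-verified Lean document; each statement's English description precedes it below -/
import Mathlib

section
/- Let I be an upward directed set, let {C_i}_{i∈I} be a family of extended Choquet cones, and for all i, j ∈ I with j ≤ i let φ_{i,j} : C_i → C_j be continuous linear maps (additive, homogeneous with respect to scalar multiplication, sending 0 to 0) such that φ_{i,i} = id and φ_{j,k} ∘ φ_{i,j} = φ_{i,k} whenever k ≤ j ≤ i. Let C = {(x_i)_i ∈ ∏_{i∈I} C_i : φ_{i,j}(x_i) = x_j for all j ≤ i}, equipped with coordinatewise addition and scalar multiplication and with the topology induced from the product topology. Then C is an extended Choquet cone. -/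
open scoped ENNReal NNReal

/-- The positive real numbers, used as scalars for cones. -/
abbrev PosReal : Type := {t : ℝ // 0 < t}

/-- An extended Choquet cone: an algebraically ordered topological cone that is a lattice
under the algebraic order, with addition distributing over `⊓` and `⊔`, whose topology is
compact, Hausdorff and locally convex. -/
class ECCone (C : Type*) extends AddCommMonoid C, Lattice C, TopologicalSpace C where
  psmul : PosReal → C → C
  psmul_add : ∀ (t : PosReal) (x y : C), psmul t (x + y) = psmul t x + psmul t y
  add_psmul : ∀ (s t : PosReal) (x : C), psmul (s + t) x = psmul s x + psmul t x
  psmul_mul : ∀ (s t : PosReal) (x : C), psmul s (psmul t x) = psmul (s * t) x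
  one_psmul : ∀ x : C, psmul 1 x = x
  psmul_zero : ∀ t : PosReal, psmul t 0 = 0
  le_iff_exists_add : ∀ x y : C, x ≤ y ↔ ∃ z, x + z = y
  add_inf_distrib : ∀ x y z : C, x + (y ⊓ z) = (x + y) ⊓ (x + z)
  add_sup_distrib : ∀ x y z : C, x + (y ⊔ z) = (x + y) ⊔ (x + z)
  continuous_add' : Continuous fun p : C × C => p.1 + p.2
  continuous_psmul : Continuous fun p : PosReal × C => psmul p.1 p.2
  compact : CompactSpace C
  t2 : T2Space C
  locally_convex : ∀ (x : C) (U : Set C), IsOpen U → x ∈ U →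
    ∃ V : Set C, IsOpen V ∧ x ∈ V ∧ V ⊆ U ∧
      ∀ y ∈ V, ∀ z ∈ V, ∀ s t : PosReal, s.1 + t.1 = 1 → psmul s y + psmul t z ∈ V

/-- The way-below relation for functions into `[0,∞]`, relative to a set `S` of functions:
`f ≪ g` iff for every increasing sequence in `S` whose pointwise supremum dominates `g`,
some term of the sequence dominates `f`. -/
def FWayBelow {α : Type*} (S : Set (α → ℝ≥0∞)) (f g : α → ℝ≥0∞) : Prop :=
  ∀ h : ℕ → α → ℝ≥0∞, (∀ n, h n ∈ S) → Monotone h → (∀ a, g a ≤ ⨆ n, h n a) → ∃ n, f ≤ h n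

namespace ECCone

variable {C : Type*} [ECCone C]

/-- `w` is an idempotent: `2w = w`. -/
def IsIdem (w : C) : Prop := w + w = w

/-- `e` is the support idempotent of `x`: the maximum of `{z : x + z = x}`. -/
def IsSuppIdem (x e : C) : Prop := x + e = x ∧ ∀ z : C, x + z = x → z ≤ e

/-- `w₁ ≫ w₂` in the lattice of idempotents with the opposite order: whenever a nonempty
downward directed family of idempotents has an infimum `≤ w₂`, some member is `≤ w₁`. -/
def IdemWayBelow (w₁ w₂ : C) : Prop :=
  ∀ D : Set C, D.Nonempty → (∀ v ∈ D, IsIdem v) → DirectedOn (· ≥ ·) D →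
    ∀ m : C, IsGLB D m → m ≤ w₂ → ∃ v ∈ D, v ≤ w₁

/-- A compact idempotent: `w ≫ w`. -/
def IsCompactIdem (w : C) : Prop := IsIdem w ∧ IdemWayBelow w w

/-- `v` is compact relative to `w`: whenever a nonempty downward directed family of
idempotents has an infimum `≤ v`, some member `u` satisfies `u ⊓ w ≤ v`. -/
def CompactRelTo (v w : C) : Prop :=
  ∀ D : Set C, D.Nonempty → (∀ u ∈ D, IsIdem u) → DirectedOn (· ≥ ·) D →
    ∀ m : C, IsGLB D m → m ≤ v → ∃ u ∈ D, u ⊓ w ≤ v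

/-- `C` has an abundance of compact idempotents: every idempotent is an infimum
of compact idempotents. -/
def HasAbundantCompactIdem (C : Type*) [ECCone C] : Prop :=
  ∀ w : C, IsIdem w → ∃ D : Set C, (∀ v ∈ D, IsCompactIdem v) ∧ IsGLB D w

/-- `C` is strongly connected: `{x : x ≤ w}` is connected for every idempotent `w`. -/
def StronglyConnected (C : Type*) [ECCone C] : Prop :=
  ∀ w : C, IsIdem w → IsConnected {x : C | x ≤ w}

/-- A linear function on a cone: additive, homogeneous, sending `0` to `0`. -/
def IsLinFun (f : C → ℝ≥0∞) : Prop :=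
  f 0 = 0 ∧ (∀ x y : C, f (x + y) = f x + f y) ∧
    ∀ (t : PosReal) (x : C), f (psmul t x) = ENNReal.ofReal t.1 * f x

/-- Membership in `Lsc(C)`: linear and lower semicontinuous. -/
def MemLsc (f : C → ℝ≥0∞) : Prop := IsLinFun f ∧ LowerSemicontinuous f

/-- Membership in `Lsc_σ(C)`: in `Lsc(C)` and `f⁻¹((a,∞])` is σ-compact for all `a < ∞`. -/
def MemLscSigma (f : C → ℝ≥0∞) : Prop :=
  MemLsc f ∧ ∀ a : ℝ≥0, IsSigmaCompact {x : C | (a : ℝ≥0∞) < f x}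

/-- Membership in `A(C)`: linear and continuous. -/
def MemA (f : C → ℝ≥0∞) : Prop := IsLinFun f ∧ Continuous f

/-- `w = supp f`, the supremum of `{x : f x = 0}`. -/
def IsSupp (f : C → ℝ≥0∞) (w : C) : Prop := IsLUB {x : C | f x = 0} w

/-- The relation `f ◁ g`: `f ≤ (1-ε)g` for some `ε > 0`, and `f` is continuous at every
point where `g` is finite. -/
def Lhd (f g : C → ℝ≥0∞) : Prop :=
  (∃ ε : ℝ, 0 < ε ∧ ∀ x, f x ≤ ENNReal.ofReal (1 - ε) * g x) ∧
    ∀ x : C, g x ≠ ⊤ → ContinuousAt f x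

end ECCone

/-- The zero element of a cone, for an explicitly given `ECCone` structure. -/
def ECCone.zeroOf {C : Type*} (inst : ECCone C) : C := letI := inst; 0

/-- The addition of a cone, for an explicitly given `ECCone` structure. -/
def ECCone.addOf {C : Type*} (inst : ECCone C) (x y : C) : C := letI := inst; x + y

/-!
The algebraic order of the projective limit is the coordinatewise order, but its lattice
operations are not coordinatewise: for compatible `x`, `y` the family `gᵢ = xᵢ ⊓ yᵢ` is only
superharmonic, `φᵢⱼ gᵢ ≤ gⱼ`. For such a family the net `i ↦ φᵢⱼ gᵢ` (`i ≥ j`) is antitone,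
so by compactness and closedness of the order it converges to its infimum, and these limits
form the greatest compatible family below `g`; this is `x ⊓ y`, and `x ⊔ y` is obtained dually.
The same limit applied to the greatest solutions `zᵢ` of `xᵢ + zᵢ = yᵢ` gives a compatible `z`
with `x + z = y`. Taking the limit commutes with translation by a compatible family, which
carries the distributive laws over to the limit. Compactness, Hausdorffness and local convexity
are inherited from the product.
-/

open Filter Topology Set

instance OrderDual.compactSpace {Y : Type*} [TopologicalSpace Y] [CompactSpace Y] :
    CompactSpace Yᵒᵈ :=
  ‹CompactSpace Y›

section CompactOrder

variable {X : Type*} [TopologicalSpace X] [CompactSpace X] [PartialOrder X]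
  [OrderClosedTopology X] {J : Type*} [Preorder J] [IsDirectedOrder J] [Nonempty J] {f : J → X}

theorem Monotone.exists_tendsto_atTop (hf : Monotone f) : ∃ a, Tendsto f atTop (𝓝 a) := by
  have hlub : ∀ b, MapClusterPt b atTop f → IsLUB (range f) b := fun b hb =>
    ⟨by
      rintro _ ⟨j, rfl⟩
      exact isClosed_Ici.mem_of_mapClusterPt hb ((eventually_ge_atTop j).mono fun _ => (hf ·)),
    fun c hc => isClosed_Iic.mem_of_mapClusterPt hb (.of_forall fun i => hc (mem_range_self i))⟩
  obtain ⟨a, ha⟩ := exists_clusterPt_of_compactSpace (map f atTop)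
  exact ⟨a, tendsto_nhds_of_unique_mapClusterPt fun b hb => (hlub b hb).unique (hlub a ha)⟩

theorem Antitone.exists_tendsto_atTop (hf : Antitone f) : ∃ a, Tendsto f atTop (𝓝 a) :=
  Monotone.exists_tendsto_atTop (X := Xᵒᵈ) hf.dual_right

theorem IsClosed.exists_isGreatest_of_directedOn {s : Set X} (hs : IsClosed s)
    (hne : s.Nonempty) (hd : DirectedOn (· ≤ ·) s) : ∃ a, IsGreatest s a := by
  have := hne.to_subtype
  have := directedOn_iff_isDirectedOrder.1 hd
  obtain ⟨a, ha⟩ := (Subtype.mono_coe (· ∈ s)).exists_tendsto_atTop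
  exact ⟨a, hs.mem_of_tendsto ha (.of_forall Subtype.prop),
    fun b hb => (isLUB_of_tendsto_atTop (Subtype.mono_coe (· ∈ s)) ha).1 ⟨⟨b, hb⟩, rfl⟩⟩

end CompactOrder

instance Set.Ici.isDirectedOrder {ι : Type*} [Preorder ι] [IsDirectedOrder ι] (a : ι) :
    IsDirectedOrder (Ici a) :=
  ⟨fun x y =>
    let ⟨c, hxc, hyc⟩ := exists_ge_ge (x : ι) y
    ⟨⟨c, x.2.trans hxc⟩, hxc, hyc⟩⟩

theorem tendsto_inclusion_Ici_atTop {ι : Type*} [Preorder ι] [IsDirectedOrder ι] {j k : ι}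
    (h : k ≤ j) : Tendsto (inclusion (Ici_subset_Ici.2 h)) atTop atTop :=
  tendsto_Ici_atTop.2 (tendsto_comp_val_Ici_atTop.2 tendsto_id)

section ProjectiveSystem

variable {ι : Type*} [Preorder ι] {X : ι → Type*} (φ : ∀ i j, j ≤ i → X i → X j)

def IsCompatible (x : ∀ i, X i) : Prop := ∀ i j (h : j ≤ i), φ i j h (x i) = x j

def IsSuperharmonic [∀ i, LE (X i)] (g : ∀ i, X i) : Prop :=
  ∀ i j (h : j ≤ i), φ i j h (g i) ≤ g j

def IsSubharmonic [∀ i, LE (X i)] (g : ∀ i, X i) : Prop :=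
  ∀ i j (h : j ≤ i), g j ≤ φ i j h (g i)

abbrev ProjLim : Type _ := {x : ∀ i, X i // IsCompatible φ x}

structure IsProjSystem [∀ i, TopologicalSpace (X i)] : Prop where
  continuous : ∀ i j (h : j ≤ i), Continuous (φ i j h)
  map_id : ∀ i (h : i ≤ i) (x : X i), φ i i h x = x
  map_comp : ∀ i j k (hij : j ≤ i) (hjk : k ≤ j) (x : X i),
    φ j k hjk (φ i j hij x) = φ i k (hjk.trans hij) x

def pushNet (g : ∀ i, X i) (j : ι) (i : Ici j) : X j := φ i j i.2 (g i)

-- A junk value unless the net converges, as it does for super- and subharmonic `g`.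
noncomputable def pushLim [∀ i, TopologicalSpace (X i)] [∀ i, Nonempty (X i)]
    (g : ∀ i, X i) (j : ι) : X j :=
  limUnder atTop (pushNet φ g j)

variable {φ} [∀ i, TopologicalSpace (X i)] [∀ i, T2Space (X i)]

theorem IsProjSystem.isClosed_setOf_isCompatible (hφ : IsProjSystem φ) :
    IsClosed {x : ∀ i, X i | IsCompatible φ x} := by
  simp only [IsCompatible, ofPred_forall]
  exact isClosed_iInter fun i => isClosed_iInter fun j => isClosed_iInter fun h =>
    isClosed_eq ((hφ.continuous i j h).comp (continuous_apply i)) (continuous_apply j)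

theorem IsProjSystem.compactSpace_projLim [∀ i, CompactSpace (X i)] (hφ : IsProjSystem φ) :
    CompactSpace (ProjLim φ) :=
  isCompact_iff_compactSpace.1 hφ.isClosed_setOf_isCompatible.isCompact

variable [∀ i, Nonempty (X i)] [IsDirectedOrder ι]

theorem IsProjSystem.isCompatible_pushLim (hφ : IsProjSystem φ) {g : ∀ i, X i}
    (hg : ∀ j, Tendsto (pushNet φ g j) atTop (𝓝 (pushLim φ g j))) :
    IsCompatible φ (pushLim φ g) := by
  intro j k h
  have hnet : φ j k h ∘ pushNet φ g j = pushNet φ g k ∘ inclusion (Ici_subset_Ici.2 h) :=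
    funext fun i => hφ.map_comp _ _ _ _ _ _
  refine tendsto_nhds_unique (((hφ.continuous j k h).tendsto _).comp (hg j)) ?_
  rw [hnet]
  exact (hg k).comp (tendsto_inclusion_Ici_atTop h)

theorem pushLim_eq_of_isCompatible {x : ∀ i, X i} (hx : IsCompatible φ x) (j : ι) :
    pushLim φ x j = x j := by
  have hnet : pushNet φ x j = fun _ => x j := funext fun i => hx i j i.2
  rw [pushLim, hnet]
  exact tendsto_const_nhds.limUnder_eq

theorem pushLim_map {T : ∀ i, X i → X i} (hT : ∀ i, Continuous (T i))
    (hTφ : ∀ i j (h : j ≤ i) (x : X i), φ i j h (T i x) = T j (φ i j h x)) {g : ∀ i, X i}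
    {j : ι} (hg : Tendsto (pushNet φ g j) atTop (𝓝 (pushLim φ g j))) :
    pushLim φ (fun i => T i (g i)) j = T j (pushLim φ g j) := by
  have hnet : pushNet φ (fun i => T i (g i)) j = T j ∘ pushNet φ g j :=
    funext fun i => hTφ _ _ _ _
  rw [pushLim, hnet]
  exact (((hT j).tendsto _).comp hg).limUnder_eq

end ProjectiveSystem

section Harmonic

variable {ι : Type*} [Preorder ι] {X : ι → Type*} [∀ i, TopologicalSpace (X i)]
  [∀ i, PartialOrder (X i)] {φ : ∀ i j, j ≤ i → X i → X j} {g : ∀ i, X i}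

theorem IsSuperharmonic.antitone_pushNet (hφ : IsProjSystem φ)
    (hmono : ∀ i j (h : j ≤ i), Monotone (φ i j h)) (hg : IsSuperharmonic φ g) (j : ι) :
    Antitone (pushNet φ g j) := by
  rintro ⟨a, ha⟩ ⟨b, hb⟩ (hab : a ≤ b)
  calc φ b j hb (g b) = φ a j ha (φ b a hab (g b)) := (hφ.map_comp _ _ _ _ _ _).symm
    _ ≤ φ a j ha (g a) := hmono _ _ _ (hg b a hab)

variable [IsDirectedOrder ι] [∀ i, CompactSpace (X i)] [∀ i, Nonempty (X i)]
  [∀ i, OrderClosedTopology (X i)]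

namespace IsSuperharmonic

variable (hφ : IsProjSystem φ) (hmono : ∀ i j (h : j ≤ i), Monotone (φ i j h))
include hφ hmono

theorem tendsto_pushLim (hg : IsSuperharmonic φ g) (j : ι) :
    Tendsto (pushNet φ g j) atTop (𝓝 (pushLim φ g j)) :=
  tendsto_nhds_limUnder (hg.antitone_pushNet hφ hmono j).exists_tendsto_atTop

theorem isCompatible_pushLim (hg : IsSuperharmonic φ g) : IsCompatible φ (pushLim φ g) :=
  hφ.isCompatible_pushLim (hg.tendsto_pushLim hφ hmono)

theorem pushLim_le (hg : IsSuperharmonic φ g) : pushLim φ g ≤ g := fun j =>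
  ((hg.antitone_pushNet hφ hmono j).le_of_tendsto (hg.tendsto_pushLim hφ hmono j)
    ⟨j, le_rfl⟩).trans (hφ.map_id j le_rfl (g j)).le

theorem le_pushLim (hg : IsSuperharmonic φ g) {w : ∀ i, X i} (hw : IsCompatible φ w)
    (hwg : w ≤ g) : w ≤ pushLim φ g := fun j =>
  ge_of_tendsto' (hg.tendsto_pushLim hφ hmono j) fun i => hw i j i.2 ▸ hmono _ _ _ (hwg i)

end IsSuperharmonic

namespace IsSubharmonic

variable (hφ : IsProjSystem φ) (hmono : ∀ i j (h : j ≤ i), Monotone (φ i j h))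
include hφ hmono

theorem tendsto_pushLim (hg : IsSubharmonic φ g) (j : ι) :
    Tendsto (pushNet φ g j) atTop (𝓝 (pushLim φ g j)) :=
  IsSuperharmonic.tendsto_pushLim (X := fun i => (X i)ᵒᵈ) hφ (fun i j h => (hmono i j h).dual) hg j

theorem isCompatible_pushLim (hg : IsSubharmonic φ g) : IsCompatible φ (pushLim φ g) :=
  hφ.isCompatible_pushLim (hg.tendsto_pushLim hφ hmono)

theorem le_pushLim (hg : IsSubharmonic φ g) : g ≤ pushLim φ g :=
  IsSuperharmonic.pushLim_le (X := fun i => (X i)ᵒᵈ) hφ (fun i j h => (hmono i j h).dual) hg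

theorem pushLim_le (hg : IsSubharmonic φ g) {w : ∀ i, X i} (hw : IsCompatible φ w)
    (hgw : g ≤ w) : pushLim φ g ≤ w :=
  IsSuperharmonic.le_pushLim (X := fun i => (X i)ᵒᵈ) hφ (fun i j h => (hmono i j h).dual) hg
    hw hgw

end IsSubharmonic

end Harmonic

section ProjLimLattice

variable {ι : Type*} [Preorder ι] {X : ι → Type*} [∀ i, Lattice (X i)]
  {φ : ∀ i j, j ≤ i → X i → X j}

theorem IsCompatible.isSuperharmonic_inf (hmono : ∀ i j (h : j ≤ i), Monotone (φ i j h))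
    {x y : ∀ i, X i} (hx : IsCompatible φ x) (hy : IsCompatible φ y) :
    IsSuperharmonic φ (x ⊓ y) := fun i j h => by
  simpa only [Pi.inf_apply, hx i j h, hy i j h] using (hmono i j h).map_inf_le (x i) (y i)

theorem IsCompatible.isSubharmonic_sup (hmono : ∀ i j (h : j ≤ i), Monotone (φ i j h))
    {x y : ∀ i, X i} (hx : IsCompatible φ x) (hy : IsCompatible φ y) :
    IsSubharmonic φ (x ⊔ y) := fun i j h => by
  simpa only [Pi.sup_apply, hx i j h, hy i j h] using (hmono i j h).le_map_sup (x i) (y i)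

variable [IsDirectedOrder ι] [∀ i, TopologicalSpace (X i)] [∀ i, CompactSpace (X i)]
  [∀ i, Nonempty (X i)] [∀ i, OrderClosedTopology (X i)]

noncomputable abbrev ProjLim.lattice (hφ : IsProjSystem φ)
    (hmono : ∀ i j (h : j ≤ i), Monotone (φ i j h)) : Lattice (ProjLim φ) where
  __ := Subtype.partialOrder _
  inf x y := ⟨pushLim φ (x.1 ⊓ y.1),
    (x.2.isSuperharmonic_inf hmono y.2).isCompatible_pushLim hφ hmono⟩
  inf_le_left x y := ((x.2.isSuperharmonic_inf hmono y.2).pushLim_le hφ hmono).trans inf_le_left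
  inf_le_right x y := ((x.2.isSuperharmonic_inf hmono y.2).pushLim_le hφ hmono).trans inf_le_right
  le_inf x y z hy hz :=
    (y.2.isSuperharmonic_inf hmono z.2).le_pushLim hφ hmono x.2 (le_inf hy hz)
  sup x y := ⟨pushLim φ (x.1 ⊔ y.1),
    (x.2.isSubharmonic_sup hmono y.2).isCompatible_pushLim hφ hmono⟩
  le_sup_left x y := le_sup_left.trans ((x.2.isSubharmonic_sup hmono y.2).le_pushLim hφ hmono)
  le_sup_right x y := le_sup_right.trans ((x.2.isSubharmonic_sup hmono y.2).le_pushLim hφ hmono)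
  sup_le x y z hx hy := (x.2.isSubharmonic_sup hmono y.2).pushLim_le hφ hmono z.2 (sup_le hx hy)

end ProjLimLattice

namespace ECCone

variable {C : Type*} [ECCone C]

instance : CompactSpace C := compact

instance : T2Space C := t2

instance : ContinuousAdd C := ⟨continuous_add'⟩

instance : OrderClosedTopology C where
  isClosed_le' := by
    have : {p : C × C | p.1 ≤ p.2} = range fun q : C × C => (q.1, q.1 + q.2) := by
      ext ⟨x, y⟩
      simp [le_iff_exists_add]
    rw [this]
    exact (isCompact_range (by fun_prop)).isClosed

theorem monotone_of_map_add {D : Type*} [ECCone D] {f : C → D}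
    (hf : ∀ x y, f (x + y) = f x + f y) : Monotone f := fun x y hxy => by
  obtain ⟨z, rfl⟩ := (le_iff_exists_add x y).1 hxy
  exact (le_iff_exists_add _ _).2 ⟨f z, (hf x z).symm⟩

theorem exists_isGreatest_add_eq {x y : C} (h : x ≤ y) : ∃ z, IsGreatest {z | x + z = y} z :=
  (isClosed_eq (by fun_prop) continuous_const).exists_isGreatest_of_directedOn
    ((le_iff_exists_add x y).1 h) fun a (ha : x + a = y) b (hb : x + b = y) =>
      ⟨a ⊔ b, by rw [mem_ofPred_eq, add_sup_distrib, ha, hb, sup_idem], le_sup_left, le_sup_right⟩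

theorem exists_convex_pi_nhds {ι : Type*} {Cf : ι → Type*} [∀ i, ECCone (Cf i)]
    {x : ∀ i, Cf i} {W : Set (∀ i, Cf i)} (hW : IsOpen W) (hx : x ∈ W) :
    ∃ V ⊆ W, IsOpen V ∧ x ∈ V ∧ ∀ y ∈ V, ∀ z ∈ V, ∀ s t : PosReal, s.1 + t.1 = 1 →
      (fun i => psmul s (y i) + psmul t (z i)) ∈ V := by
  obtain ⟨F, u, hFu, hFW⟩ := isOpen_pi_iff.1 hW x hx
  have hv : ∀ i, ∃ v : Set (Cf i), IsOpen v ∧ x i ∈ v ∧ (i ∈ F → v ⊆ u i) ∧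
      ∀ y ∈ v, ∀ z ∈ v, ∀ s t : PosReal, s.1 + t.1 = 1 → psmul s y + psmul t z ∈ v := by
    intro i
    by_cases hi : i ∈ F
    · obtain ⟨v, hvo, hxv, hvu, hvc⟩ := locally_convex (x i) (u i) (hFu i hi).1 (hFu i hi).2
      exact ⟨v, hvo, hxv, fun _ => hvu, hvc⟩
    · exact ⟨univ, isOpen_univ, trivial, fun h => absurd h hi, fun _ _ _ _ _ _ _ => trivial⟩
  choose v hvo hxv hvu hvc using hv
  refine ⟨(F : Set ι).pi v, fun y hy => hFW fun i hi => hvu i hi (hy i hi),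
    isOpen_set_pi F.finite_toSet fun i _ => hvo i, fun i _ => hxv i, ?_⟩
  exact fun y hy z hz s t hst i hi => hvc i _ (hy i hi) _ (hz i hi) s t hst

end ECCone

section ProjectiveLimit

open ECCone

variable {ι : Type*} [Preorder ι] {Cf : ι → Type*} [∀ i, ECCone (Cf i)]
  {φ : ∀ i j, j ≤ i → Cf i → Cf j}

def compatibleSubmonoid
    (φ_add : ∀ i j (h : j ≤ i) (x y : Cf i), φ i j h (x + y) = φ i j h x + φ i j h y)
    (φ_zero : ∀ i j (h : j ≤ i), φ i j h 0 = 0) : AddSubmonoid (∀ i, Cf i) where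
  carrier := {x | IsCompatible φ x}
  add_mem' {x y} hx hy i j h := by simp only [Pi.add_apply, φ_add, hx i j h, hy i j h]
  zero_mem' i j h := φ_zero i j h

theorem monotone_bonding
    (φ_add : ∀ i j (h : j ≤ i) (x y : Cf i), φ i j h (x + y) = φ i j h x + φ i j h y)
    (i j : ι) (h : j ≤ i) : Monotone (φ i j h) :=
  monotone_of_map_add (φ_add i j h)

variable [IsDirectedOrder ι]

theorem IsCompatible.pushLim_add
    (φ_add : ∀ i j (h : j ≤ i) (x y : Cf i), φ i j h (x + y) = φ i j h x + φ i j h y)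
    {x g : ∀ i, Cf i} (hx : IsCompatible φ x) {j : ι}
    (hg : Tendsto (pushNet φ g j) atTop (𝓝 (pushLim φ g j))) :
    pushLim φ (x + g) j = x j + pushLim φ g j :=
  pushLim_map (T := fun i => (x i + ·)) (fun i => by fun_prop)
    (fun i j h u => by rw [φ_add, hx i j h]) hg

section

variable (hφ : IsProjSystem φ)
  (φ_add : ∀ i j (h : j ≤ i) (x y : Cf i), φ i j h (x + y) = φ i j h x + φ i j h y)
include hφ φ_add

theorem IsCompatible.exists_isCompatible_add_eq {x y : ∀ i, Cf i} (hx : IsCompatible φ x)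
    (hy : IsCompatible φ y) (hxy : x ≤ y) : ∃ z, IsCompatible φ z ∧ x + z = y := by
  choose z hz using fun i => exists_isGreatest_add_eq (hxy i)
  have hsup : IsSuperharmonic φ z := fun i j h =>
    (hz j).2 (by rw [mem_ofPred_eq, ← hx i j h, ← φ_add, (hz i).1, hy i j h])
  refine ⟨pushLim φ z, hsup.isCompatible_pushLim hφ (monotone_bonding φ_add), funext fun j => ?_⟩
  rw [Pi.add_apply, ← hx.pushLim_add φ_add (hsup.tendsto_pushLim hφ (monotone_bonding φ_add) j)]
  have : x + z = y := funext fun i => (hz i).1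
  rw [this, pushLim_eq_of_isCompatible hy]

theorem IsCompatible.add_pushLim_inf {x y z : ∀ i, Cf i} (hx : IsCompatible φ x)
    (hy : IsCompatible φ y) (hz : IsCompatible φ z) :
    x + pushLim φ (y ⊓ z) = pushLim φ ((x + y) ⊓ (x + z)) := by
  funext j
  rw [Pi.add_apply, ← hx.pushLim_add φ_add
    ((hy.isSuperharmonic_inf (monotone_bonding φ_add) hz).tendsto_pushLim hφ
      (monotone_bonding φ_add) j)]
  congr 1
  exact funext fun i => add_inf_distrib (x i) (y i) (z i)

theorem IsCompatible.add_pushLim_sup {x y z : ∀ i, Cf i} (hx : IsCompatible φ x)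
    (hy : IsCompatible φ y) (hz : IsCompatible φ z) :
    x + pushLim φ (y ⊔ z) = pushLim φ ((x + y) ⊔ (x + z)) := by
  funext j
  rw [Pi.add_apply, ← hx.pushLim_add φ_add
    ((hy.isSubharmonic_sup (monotone_bonding φ_add) hz).tendsto_pushLim hφ
      (monotone_bonding φ_add) j)]
  congr 1
  exact funext fun i => add_sup_distrib (x i) (y i) (z i)

end

noncomputable abbrev ECCone.projLimit (hφ : IsProjSystem φ)
    (φ_add : ∀ i j (h : j ≤ i) (x y : Cf i), φ i j h (x + y) = φ i j h x + φ i j h y)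
    (φ_zero : ∀ i j (h : j ≤ i), φ i j h 0 = 0)
    (φ_smul : ∀ i j (h : j ≤ i) (t : PosReal) (x : Cf i),
      φ i j h (psmul t x) = psmul t (φ i j h x)) : ECCone (ProjLim φ) where
  toAddCommMonoid := (compatibleSubmonoid φ_add φ_zero).toAddCommMonoid
  toLattice := ProjLim.lattice hφ (monotone_bonding φ_add)
  toTopologicalSpace := instTopologicalSpaceSubtype
  psmul t x := ⟨fun i => psmul t (x.1 i), fun i j h => by rw [φ_smul, x.2 i j h]⟩
  psmul_add t x y := Subtype.ext <| funext fun i => psmul_add t (x.1 i) (y.1 i)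
  add_psmul s t x := Subtype.ext <| funext fun i => add_psmul s t (x.1 i)
  psmul_mul s t x := Subtype.ext <| funext fun i => psmul_mul s t (x.1 i)
  one_psmul x := Subtype.ext <| funext fun i => one_psmul (x.1 i)
  psmul_zero t := Subtype.ext <| funext fun _ => psmul_zero t
  le_iff_exists_add x y := by
    refine ⟨fun hxy => ?_, fun ⟨z, hz⟩ i => ?_⟩
    · obtain ⟨z, hzc, hz⟩ := x.2.exists_isCompatible_add_eq hφ φ_add y.2 hxy
      exact ⟨⟨z, hzc⟩, Subtype.ext hz⟩
    · exact (le_iff_exists_add _ _).2 ⟨z.1 i, congrFun (congrArg Subtype.val hz) i⟩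
  add_inf_distrib x y z := Subtype.ext (x.2.add_pushLim_inf hφ φ_add y.2 z.2)
  add_sup_distrib x y z := Subtype.ext (x.2.add_pushLim_sup hφ φ_add y.2 z.2)
  continuous_add' :=
    (continuous_pi fun i =>
      ((continuous_apply i).comp (continuous_subtype_val.comp continuous_fst)).add
        ((continuous_apply i).comp (continuous_subtype_val.comp continuous_snd)) :
      Continuous fun p : ProjLim φ × ProjLim φ => fun i => p.1.1 i + p.2.1 i).subtype_mk _
  continuous_psmul :=
    (continuous_pi fun i => continuous_psmul.comp (continuous_fst.prodMk
      ((continuous_apply i).comp (continuous_subtype_val.comp continuous_snd))) :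
      Continuous fun p : PosReal × ProjLim φ => fun i => psmul p.1 (p.2.1 i)).subtype_mk _
  compact := hφ.compactSpace_projLim
  t2 := inferInstance
  locally_convex x U hU hxU := by
    obtain ⟨W, hW, rfl⟩ := isOpen_induced_iff.1 hU
    obtain ⟨V, hVW, hV, hxV, hVc⟩ := exists_convex_pi_nhds hW hxU
    exact ⟨Subtype.val ⁻¹' V, hV.preimage continuous_subtype_val, hxV,
      preimage_mono hVW, fun y hy z hz s t hst => hVc _ hy _ hz s t hst⟩

end ProjectiveLimit

/-- The projective limit of a projective system of extended Choquet cones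
(over an upward directed index set, with continuous linear bonding maps), realized as the
compatible sequences in the product with coordinatewise operations and the induced product
topology, is again an extended Choquet cone. -/
theorem stmt_0 {ι : Type*} [Preorder ι] [IsDirected ι (· ≤ ·)]
    (Cf : ι → Type*) [∀ i, ECCone (Cf i)]
    (φ : ∀ i j, j ≤ i → Cf i → Cf j)
    (φ_cont : ∀ i j (h : j ≤ i), Continuous (φ i j h))
    (φ_add : ∀ i j (h : j ≤ i) (x y : Cf i), φ i j h (x + y) = φ i j h x + φ i j h y)
    (φ_zero : ∀ i j (h : j ≤ i), φ i j h 0 = 0)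
    (φ_smul : ∀ i j (h : j ≤ i) (t : PosReal) (x : Cf i),
      φ i j h (ECCone.psmul t x) = ECCone.psmul t (φ i j h x))
    (φ_id : ∀ i (h : i ≤ i) (x : Cf i), φ i i h x = x)
    (φ_comp : ∀ i j k (hij : j ≤ i) (hjk : k ≤ j) (x : Cf i),
      φ j k hjk (φ i j hij x) = φ i k (hjk.trans hij) x) :
    ∃ inst : ECCone {x : ∀ i, Cf i // ∀ i j (h : j ≤ i), φ i j h (x i) = x j},
      inst.toTopologicalSpace = instTopologicalSpaceSubtype ∧
      (ECCone.zeroOf inst).1 = (fun _ => 0) ∧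
      (∀ x y : {x : ∀ i, Cf i // ∀ i j (h : j ≤ i), φ i j h (x i) = x j},
        (ECCone.addOf inst x y).1 = fun i => x.1 i + y.1 i) ∧
      (∀ (t : PosReal) (x : {x : ∀ i, Cf i // ∀ i j (h : j ≤ i), φ i j h (x i) = x j}),
        (ECCone.psmul (self := inst) t x).1 = fun i => ECCone.psmul t (x.1 i)) :=
  ⟨ECCone.projLimit ⟨φ_cont, φ_id, φ_comp⟩ φ_add φ_zero φ_smul, rfl, rfl,
    fun _ _ => rfl, fun _ _ => rfl⟩
end

section
/- Let C be an extended Choquet cone and let x ∈ C. Then the sequence ((1/n)·x)_{n∈ℕ} converges in C, and its limit is the support idempotent ε(x), i.e. ε(x) = lim_n (1/n)·x. -/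
open scoped ENNReal NNReal

/-!
Write `aₙ = (1/(n+1))·x` and `e = ε(x)`. Since `e` is idempotent, `(1/(n+1))·e = e`, so
`e + aₙ = (1/(n+1))·(e + x) = aₙ`; and `x + aₙ = (1 + 1/(n+1))·x → x`. By compactness it
suffices that every cluster point `y` of `(aₙ)` equals `e`. Continuity of addition gives
`x + y = x`, hence `y ≤ e` by maximality of `e`; closedness of `{c | e + c = c}` gives
`e + y = y`, hence `e ≤ y`.
-/

open Filter Topology

section ContinuousAdd

variable {M : Type*} [TopologicalSpace M] [Add M] [ContinuousAdd M] [T2Space M]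

lemma isClosed_setOf_add_eq_self (e : M) : IsClosed {c : M | e + c = c} :=
  isClosed_eq (continuous_const.add continuous_id) continuous_id

lemma MapClusterPt.add_eq_of_tendsto {ι : Type*} {l : Filter ι} {a : ι → M} {x y z : M}
    (hy : MapClusterPt y l a) (h : Tendsto (fun i => x + a i) l (𝓝 z)) : x + y = z :=
  eq_of_nhds_neBot ((hy.tendsto_comp (tendsto_const_nhds.add tendsto_id)).clusterPt.mono h)

end ContinuousAdd

namespace ECCone

variable {C : Type*} [ECCone C]

instance (priority := 100) inst_s1 : CompactSpace C := ECCone.compact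
instance (priority := 100) inst_s1_2 : T2Space C := ECCone.t2
instance (priority := 100) inst_s1_3 : ContinuousAdd C := ⟨ECCone.continuous_add'⟩

noncomputable def invNatSucc (n : ℕ) : PosReal := ⟨1 / (n + 1 : ℝ), by positivity⟩

lemma le_of_add_eq {e y : C} (h : e + y = y) : e ≤ y :=
  (le_iff_exists_add e y).2 ⟨y, h⟩

lemma IsSuppIdem.isIdem {x e : C} (he : IsSuppIdem x e) : IsIdem e :=
  le_antisymm (he.2 _ (by rw [← add_assoc, he.1, he.1])) ((le_iff_exists_add e _).2 ⟨e, rfl⟩)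

lemma psmul_natCast_add_one_of_isIdem (n : ℕ) {w : C} (hw : IsIdem w) :
    psmul ⟨n + 1, by positivity⟩ w = w := by
  induction n with
  | zero =>
    have hone : (⟨((0 : ℕ) : ℝ) + 1, by positivity⟩ : PosReal) = 1 := Subtype.ext (by simp)
    rw [hone, one_psmul]
  | succ n ih =>
    have hsplit : (⟨((n + 1 : ℕ) : ℝ) + 1, by positivity⟩ : PosReal)
        = ⟨(n : ℝ) + 1, by positivity⟩ + 1 :=
      Subtype.ext (by push_cast [Positive.coe_add, Positive.val_one]; ring)
    rw [hsplit, add_psmul, ih, one_psmul, hw]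

lemma psmul_invNatSucc_of_isIdem (n : ℕ) {w : C} (hw : IsIdem w) :
    psmul (invNatSucc n) w = w := by
  have hidem : IsIdem (psmul (invNatSucc n) w) := by
    rw [IsIdem, ← psmul_add, hw]
  have hinv : (⟨(n : ℝ) + 1, by positivity⟩ : PosReal) * invNatSucc n = 1 :=
    Subtype.ext (by simp [invNatSucc, Positive.val_mul, Positive.val_one]; field_simp)
  calc psmul (invNatSucc n) w
      = psmul ⟨(n : ℝ) + 1, by positivity⟩ (psmul (invNatSucc n) w) :=
        (psmul_natCast_add_one_of_isIdem n hidem).symm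
    _ = w := by rw [psmul_mul, hinv, one_psmul]

lemma add_psmul_invNatSucc_of_add_eq {e x : C} (he : IsIdem e) (hex : e + x = x) (n : ℕ) :
    e + psmul (invNatSucc n) x = psmul (invNatSucc n) x := by
  conv_lhs => rw [← psmul_invNatSucc_of_isIdem n he, ← psmul_add, hex]

lemma _root_.Filter.Tendsto.psmul_const {ι : Type*} {l : Filter ι} {t : ι → PosReal} {s : PosReal}
    (ht : Tendsto t l (𝓝 s)) (x : C) : Tendsto (fun i => psmul (t i) x) l (𝓝 (psmul s x)) :=
  (continuous_psmul.tendsto (s, x)).comp (ht.prodMk_nhds tendsto_const_nhds)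

lemma tendsto_one_add_invNatSucc : Tendsto (fun n => 1 + invNatSucc n) atTop (𝓝 1) := by
  rw [tendsto_subtype_rng]
  simpa [invNatSucc, Positive.coe_add, Positive.val_one] using
    (tendsto_one_div_add_atTop_nhds_zero_nat (𝕜 := ℝ)).const_add 1

lemma tendsto_add_psmul_invNatSucc (x : C) :
    Tendsto (fun n => x + psmul (invNatSucc n) x) atTop (𝓝 x) := by
  simpa only [add_psmul, one_psmul] using tendsto_one_add_invNatSucc.psmul_const x

end ECCone

open ECCone

/-- In an extended Choquet cone, for every `x` the sequence `((1/n)·x)ₙ`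
converges and its limit is the support idempotent `ε(x)` of `x`. -/
theorem stmt_1 {C : Type*} [ECCone C] (x e : C) (he : ECCone.IsSuppIdem x e) :
    Filter.Tendsto
      (fun n : ℕ => ECCone.psmul ⟨1 / (n + 1 : ℝ), by positivity⟩ x)
      Filter.atTop (nhds e) := by
  change Tendsto (fun n => psmul (invNatSucc n) x) atTop (𝓝 e)
  refine tendsto_nhds_of_unique_mapClusterPt fun y hy => le_antisymm ?_ ?_
  · exact he.2 y (hy.add_eq_of_tendsto (tendsto_add_psmul_invNatSucc x))
  · have hex : e + x = x := by rw [add_comm, he.1]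
    exact le_of_add_eq <| (isClosed_setOf_add_eq_self e).mem_of_mapClusterPt hy <|
      Eventually.of_forall (add_psmul_invNatSucc_of_add_eq he.isIdem hex)
end
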